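/- arXiv:1311.5690 — 8 statements merged into one kernel-verified Lean document; each statement's English description precedes it below -/
import Mathlib

section
/- Define a relation R on positive integers by: R(x, 3x+1) for all x; R(x, x/2) whenever x is even; R(x, 2x) for all x; and R(x, (x-1)/3) whenever x ≡ 1 (mod 3) and x > 1. Then for every positive integer k, the numbers 9k+3 and 9k+4 are connected by a finite chain of R-steps (i.e., 9k+4 is reachable from 9k+3 under the reflexive-transitive closure of R). -/
/-!
Since `9k + 3 = 3m` with `m = 3k + 1` and `9k + 4 = 3m + 1`, it suffices to descend from `3m`
to `m`. This is done by going up first: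
`3m → 9m + 1 → 36m + 4 = 3(12m + 1) + 1 → 12m + 1 = 3(4m) + 1 → 4m → m`.
-/

/-- One allowed move of model M1 on positive integers. -/
def M1Step (x y : ℕ) : Prop :=
  0 < x ∧ (y = 3 * x + 1 ∨ y = 2 * x ∨ (x % 2 = 0 ∧ y = x / 2) ∨
    (x % 3 = 1 ∧ 1 < x ∧ y = (x - 1) / 3))

open Relation

namespace M1Step

variable {x y : ℕ}

theorem to_three_mul_add_one (hx : 0 < x) : M1Step x (3 * x + 1) :=
  ⟨hx, Or.inl rfl⟩

theorem to_two_mul (hx : 0 < x) : M1Step x (2 * x) :=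
  ⟨hx, Or.inr (Or.inl rfl)⟩

theorem of_two_mul (hy : 0 < y) : M1Step (2 * y) y :=
  ⟨by omega, Or.inr (Or.inr (Or.inl ⟨by omega, by omega⟩))⟩

theorem of_three_mul_add_one (hy : 0 < y) : M1Step (3 * y + 1) y :=
  ⟨by omega, Or.inr (Or.inr (Or.inr ⟨by omega, by omega, by omega⟩))⟩

theorem reflTransGen_four_mul (hx : 0 < x) : ReflTransGen M1Step x (4 * x) := by
  have h : M1Step (2 * x) (2 * (2 * x)) := to_two_mul (by omega)
  rw [show 4 * x = 2 * (2 * x) by ring]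
  exact .tail (.single (to_two_mul hx)) h

theorem reflTransGen_of_four_mul (hy : 0 < y) : ReflTransGen M1Step (4 * y) y := by
  have h : M1Step (2 * (2 * y)) (2 * y) := of_two_mul (by omega)
  rw [show 4 * y = 2 * (2 * y) by ring]
  exact .tail (.single h) (of_two_mul hy)

theorem reflTransGen_of_three_mul (hy : 0 < y) : ReflTransGen M1Step (3 * y) y := by
  have up : ReflTransGen M1Step (3 * y) (3 * (12 * y + 1) + 1) := by
    have h := reflTransGen_four_mul (x := 3 * (3 * y) + 1) (by omega)
    rw [show 4 * (3 * (3 * y) + 1) = 3 * (12 * y + 1) + 1 by ring] at h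
    exact .head (to_three_mul_add_one (by omega)) h
  have down : ReflTransGen M1Step (12 * y + 1) (4 * y) := by
    rw [show 12 * y + 1 = 3 * (4 * y) + 1 by ring]
    exact .single (of_three_mul_add_one (by omega))
  exact up.trans <| .head (of_three_mul_add_one (by omega)) <|
    down.trans (reflTransGen_of_four_mul hy)

end M1Step

theorem reach_9k3_to_9k4_general (k : ℕ) :
    Relation.ReflTransGen M1Step (9 * k + 3) (9 * k + 4) := by
  have hm : 0 < 3 * k + 1 := by omega
  convert (M1Step.reflTransGen_of_three_mul hm).tail (M1Step.to_three_mul_add_one hm) using 1 <;>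
    ring

theorem reach_9k3_to_9k4 (k : ℕ) (hk : 0 < k) :
    Relation.ReflTransGen M1Step (9 * k + 3) (9 * k + 4) :=
  reach_9k3_to_9k4_general k
end

section
/- In the model M1 (moves x ↦ 3x+1; x ↦ 2x; x ↦ x/2 if 2 ∣ x; x ↦ (x-1)/3 if x ≡ 1 mod 3 with positive result), for every positive integer k the number 9k+4 is reachable from 9k+1 via the move sequence D, D, F, F, B, B, T, T, with all intermediate values being positive integers and all side conditions satisfied. -/
namespace M1Step

variable {x y : ℕ}

theorem of_eq_three_mul_add_one (hx : 0 < x) (h : y = 3 * x + 1) : M1Step x y :=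
  ⟨hx, .inl h⟩

theorem of_eq_two_mul (hx : 0 < x) (h : y = 2 * x) : M1Step x y :=
  ⟨hx, .inr (.inl h)⟩

theorem of_two_mul_eq (hy : 0 < y) (h : x = 2 * y) : M1Step x y :=
  ⟨by omega, .inr (.inr (.inl ⟨by omega, by omega⟩))⟩

theorem of_three_mul_add_one_eq (hy : 0 < y) (h : x = 3 * y + 1) : M1Step x y :=
  ⟨by omega, .inr (.inr (.inr ⟨by omega, by omega, by omega⟩))⟩

end M1Step

theorem reach_9k1_to_9k4_via_DDFFBBTT (k : ℕ) (hk : 0 < k) :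
    M1Step (9 * k + 1) (18 * k + 2) ∧ M1Step (18 * k + 2) (36 * k + 4) ∧
    M1Step (36 * k + 4) (12 * k + 1) ∧ M1Step (12 * k + 1) (4 * k) ∧
    M1Step (4 * k) (2 * k) ∧ M1Step (2 * k) k ∧
    M1Step k (3 * k + 1) ∧ M1Step (3 * k + 1) (9 * k + 4) :=
  ⟨.of_eq_two_mul (by omega) (by ring), .of_eq_two_mul (by omega) (by ring),
    .of_three_mul_add_one_eq (by omega) (by ring), .of_three_mul_add_one_eq (by omega) (by ring),
    .of_two_mul_eq (by omega) (by ring), .of_two_mul_eq hk rfl,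
    .of_eq_three_mul_add_one hk rfl, .of_eq_three_mul_add_one (by omega) (by ring)⟩
end

section
/- In the model M1 (moves x ↦ 3x+1; x ↦ 2x; x ↦ x/2 if 2 ∣ x; x ↦ (x-1)/3 if x ≡ 1 mod 3 with positive result), for every positive integer k the number 9k+4 is reachable from 9k via the move sequence T, D, D, F, D, D, F, F, B, B, B, B, T, T. -/
namespace M1Step

variable {x y : ℕ}

theorem triple (hx : 0 < x) (hy : y = 3 * x + 1) : M1Step x y :=
  ⟨hx, Or.inl hy⟩

theorem double (hx : 0 < x) (hy : y = 2 * x) : M1Step x y :=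
  ⟨hx, Or.inr (Or.inl hy)⟩

theorem half (hy : 0 < y) (hx : x = 2 * y) : M1Step x y :=
  ⟨by omega, Or.inr (Or.inr (Or.inl ⟨by omega, by omega⟩))⟩

theorem third (hy : 0 < y) (hx : x = 3 * y + 1) : M1Step x y :=
  ⟨by omega, Or.inr (Or.inr (Or.inr ⟨by omega, by omega, by omega⟩))⟩

end M1Step

theorem reach_9k_to_9k4 (k : ℕ) (hk : 0 < k) :
    M1Step (9 * k) (27 * k + 1) ∧ M1Step (27 * k + 1) (54 * k + 2) ∧
    M1Step (54 * k + 2) (108 * k + 4) ∧ M1Step (108 * k + 4) (36 * k + 1) ∧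
    M1Step (36 * k + 1) (72 * k + 2) ∧ M1Step (72 * k + 2) (144 * k + 4) ∧
    M1Step (144 * k + 4) (48 * k + 1) ∧ M1Step (48 * k + 1) (16 * k) ∧
    M1Step (16 * k) (8 * k) ∧ M1Step (8 * k) (4 * k) ∧
    M1Step (4 * k) (2 * k) ∧ M1Step (2 * k) k ∧
    M1Step k (3 * k + 1) ∧ M1Step (3 * k + 1) (9 * k + 4) := by
  refine ⟨.triple ?_ ?_, .double ?_ ?_, .double ?_ ?_, .third ?_ ?_, .double ?_ ?_,
    .double ?_ ?_, .third ?_ ?_, .third ?_ ?_, .half ?_ ?_, .half ?_ ?_, .half ?_ ?_,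
    .half ?_ ?_, .triple ?_ ?_, .triple ?_ ?_⟩ <;> omega
end

section
/- Define the model MS on positive integers with allowed moves: x ↦ 3x+1 if x is odd; x ↦ x/2 if x is even; x ↦ (x-1)/3 if x ≡ 1 (mod 3) and x > 1. Then for every positive integer A with A > 1, there exists a finite sequence of allowed MS-moves transforming A into some positive integer strictly smaller than A. -/
/-!
Even numbers are simply halved. An odd `A` is `2 ^ (m + 1) * q - 1` with `q` odd. The round
`x ↦ 3x + 1 ↦ (3x + 1) / 2` trades a factor `2` of `x + 1` for a factor `3`, so `A` climbs to
`3 ^ (m + 1) * q - 1 = 2w`. Halving gives `w = (3 ^ (m + 1) * q - 1) / 2`, and the moves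
`x ↦ (x - 1) / 3` strip factors `3` of `2x + 1`, reaching `(3q - 1) / 2 < A`.
-/

/-- One allowed move of model MS on positive integers. -/
def MSStep (x y : ℕ) : Prop :=
  0 < x ∧ ((x % 2 = 1 ∧ y = 3 * x + 1) ∨ (x % 2 = 0 ∧ y = x / 2) ∨
    (x % 3 = 1 ∧ 1 < x ∧ y = (x - 1) / 3))

open Relation

lemma msStep_of_odd {x : ℕ} (hx : Odd x) : MSStep x (3 * x + 1) :=
  ⟨hx.pos, Or.inl ⟨Nat.odd_iff.mp hx, rfl⟩⟩

lemma msStep_two_mul {y : ℕ} (hy : 0 < y) : MSStep (2 * y) y :=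
  ⟨by lia, Or.inr (Or.inl ⟨by lia, by lia⟩)⟩

lemma msStep_three_mul_add_one {y : ℕ} (hy : 0 < y) : MSStep (3 * y + 1) y :=
  ⟨by lia, Or.inr (Or.inr ⟨by lia, by lia, by lia⟩)⟩

lemma reflTransGen_msStep_of_two_pow_mul {m x y z : ℕ} (hz : 0 < z)
    (hx : x + 1 = 2 ^ m * z) (hy : y + 1 = 3 ^ m * z) : ReflTransGen MSStep x y := by
  induction m generalizing x z with
  | zero =>
    obtain rfl : x = y := by simp only [pow_zero, one_mul] at hx hy; lia
    exact .refl
  | succ m ih =>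
    have hpos : 0 < 2 ^ m * z := by positivity
    have hodd : Odd x := ⟨2 ^ m * z - 1, by rw [pow_succ] at hx; lia⟩
    have hround : 3 * x + 1 = 2 * (2 ^ m * (3 * z) - 1) := by
      rw [pow_succ] at hx; lia
    have hrest : ReflTransGen MSStep (2 ^ m * (3 * z) - 1) y :=
      ih (z := 3 * z) (by lia) (by lia) (by rw [hy]; ring)
    exact .head (msStep_of_odd hodd) (hround ▸ .head (msStep_two_mul (by lia)) hrest)

lemma reflTransGen_msStep_of_three_pow_mul {k x y : ℕ} (hy : 0 < y)
    (hx : 2 * x + 1 = 3 ^ k * (2 * y + 1)) : ReflTransGen MSStep x y := by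
  induction k generalizing x with
  | zero =>
    obtain rfl : x = y := by lia
    exact .refl
  | succ k ih =>
    obtain ⟨x', rfl⟩ : ∃ x', x = 3 * x' + 1 := ⟨x / 3, by rw [pow_succ] at hx; lia⟩
    have hx' : 2 * x' + 1 = 3 ^ k * (2 * y + 1) := by rw [pow_succ] at hx; lia
    have hpos : 0 < x' := by nlinarith [Nat.one_le_pow k 3 (by norm_num)]
    exact .head (msStep_three_mul_add_one hpos) (ih hx')

theorem ms_descending (A : ℕ) (hA : 1 < A) :
    ∃ C : ℕ, Relation.ReflTransGen MSStep A C ∧ 0 < C ∧ C < A := by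
  obtain ⟨k, rfl | rfl⟩ := Nat.even_or_odd' A
  · exact ⟨k, .single (msStep_two_mul (by lia)), by lia, by lia⟩
  obtain ⟨m, q, hq, hkq⟩ := Nat.exists_eq_two_pow_mul_odd (n := k + 1) (by lia)
  obtain ⟨w, hw⟩ := ((by decide : Odd 3).pow (n := m + 1)).mul hq
  obtain ⟨C, hC⟩ := (by decide : Odd 3).mul hq
  have hclimb : ReflTransGen MSStep (2 * k + 1) (2 * w) :=
    reflTransGen_msStep_of_two_pow_mul (m := m + 1) hq.pos
      (by rw [pow_succ, mul_right_comm, ← hkq]; ring) (by lia)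
  have hdescend : ReflTransGen MSStep w C :=
    reflTransGen_msStep_of_three_pow_mul (k := m) (by lia) (by rw [← hw, ← hC]; ring)
  have hw_ge : 3 * q ≤ 3 ^ (m + 1) * q := Nat.mul_le_mul_right q (Nat.le_self_pow (by simp) 3)
  have hq_le : q ≤ 2 ^ m * q := Nat.le_mul_of_pos_left q (by positivity)
  exact ⟨C, (hclimb.tail (msStep_two_mul (by lia))).trans hdescend, by lia, by lia⟩
end

section
/- In the model MS (moves: x ↦ 3x+1 if x odd; x ↦ x/2 if x even; x ↦ (x-1)/3 if x ≡ 1 mod 3 and x > 1), every positive integer A can be transformed to 1 by a finite sequence of allowed moves. -/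
open Relation

namespace MSStep

theorem of_odd {x : ℕ} (hx : Odd x) : MSStep x (3 * x + 1) :=
  ⟨hx.pos, Or.inl ⟨Nat.odd_iff.mp hx, rfl⟩⟩

theorem two_mul {m : ℕ} (hm : 0 < m) : MSStep (2 * m) m :=
  ⟨by omega, Or.inr (Or.inl ⟨by omega, by omega⟩)⟩

theorem three_mul_add_one {m : ℕ} (hm : 0 < m) : MSStep (3 * m + 1) m :=
  ⟨by omega, Or.inr (Or.inr ⟨by omega, by omega, by omega⟩)⟩

theorem reflTransGen_two_pow_mul_sub_one (a : ℕ) {b : ℕ} (hb : 0 < b) :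
    ReflTransGen MSStep (2 ^ a * b - 1) (3 ^ a * b - 1) := by
  induction a generalizing b with
  | zero => simpa using ReflTransGen.refl
  | succ a ih =>
    have hpos : 0 < 2 ^ a * b := by positivity
    have hodd : Odd (2 ^ (a + 1) * b - 1) := ⟨2 ^ a * b - 1, by rw [pow_succ]; grind⟩
    have htriple : 3 * (2 ^ (a + 1) * b - 1) + 1 = 2 * (2 ^ a * (3 * b) - 1) := by
      rw [pow_succ]; grind
    refine .head (of_odd hodd) ?_
    rw [htriple]
    refine .head (two_mul (by omega)) ?_
    simpa [pow_succ, mul_assoc, mul_comm 3 b] using ih (b := 3 * b) (by omega)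

theorem reflTransGen_three_pow_mul_sub_one_div_two (k : ℕ) {v : ℕ} (hv : Odd v) (hv1 : 1 < v) :
    ReflTransGen MSStep ((3 ^ k * v - 1) / 2) ((v - 1) / 2) := by
  induction k with
  | zero => simpa using ReflTransGen.refl
  | succ k ih =>
    obtain ⟨t, ht⟩ : Odd (3 ^ k * v) := (Odd.pow (by decide)).mul hv
    have hge : v ≤ 3 ^ k * v := Nat.le_mul_of_pos_left v (by positivity)
    have hsplit : (3 ^ (k + 1) * v - 1) / 2 = 3 * ((3 ^ k * v - 1) / 2) + 1 := by
      rw [pow_succ, mul_right_comm, ht]; omega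
    rw [hsplit]
    exact .head (three_mul_add_one (by omega)) ih

theorem exists_reflTransGen_lt_of_odd {x : ℕ} (hx : Odd x) (hx1 : 1 < x) :
    ∃ y, 0 < y ∧ y < x ∧ ReflTransGen MSStep x y := by
  obtain ⟨a, b, hb, hxb⟩ := Nat.exists_eq_two_pow_mul_odd (n := x + 1) (by omega)
  obtain ⟨a, rfl⟩ : ∃ a', a = a' + 1 :=
    Nat.exists_eq_add_one.mpr <| Nat.pos_of_ne_zero <| by rintro rfl; grind
  have hb0 := hb.pos
  have hx_eq : x = 2 ^ (a + 1) * b - 1 := by omega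
  have hb_le : 2 * b ≤ x + 1 := by
    rw [hxb]
    exact Nat.mul_le_mul_right b (Nat.le_self_pow a.succ_ne_zero 2)
  have hclimb := reflTransGen_two_pow_mul_sub_one (a + 1) hb0
  have hdescend := reflTransGen_three_pow_mul_sub_one_div_two a (v := 3 * b)
    (Odd.mul (by decide) hb) (by omega)
  obtain ⟨t, ht⟩ : Odd (3 ^ a * (3 * b)) := (Odd.pow (by decide)).mul (Odd.mul (by decide) hb)
  have hge : 3 * b ≤ 3 ^ a * (3 * b) := Nat.le_mul_of_pos_left _ (by positivity)
  have hhalve : MSStep (3 ^ (a + 1) * b - 1) ((3 ^ a * (3 * b) - 1) / 2) := by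
    rw [pow_succ, mul_assoc, ht]
    convert two_mul (m := t) (by omega) using 1 <;> omega
  refine ⟨(3 * b - 1) / 2, by omega, by omega, ?_⟩
  rw [hx_eq]
  exact (hclimb.tail hhalve).trans hdescend

theorem exists_reflTransGen_lt {x : ℕ} (hx1 : 1 < x) :
    ∃ y, 0 < y ∧ y < x ∧ ReflTransGen MSStep x y := by
  rcases Nat.even_or_odd x with ⟨m, rfl⟩ | hodd
  · exact ⟨m, by omega, by omega, .single (Nat.two_mul m ▸ two_mul (by omega))⟩
  · exact exists_reflTransGen_lt_of_odd hodd hx1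

end MSStep

theorem ms_reaches_one (A : ℕ) (hA : 0 < A) :
    Relation.ReflTransGen MSStep A 1 := by
  induction A using Nat.strong_induction_on with
  | _ A ih =>
    obtain rfl | hA1 := (show 1 ≤ A from hA).eq_or_lt
    · exact .refl
    obtain ⟨y, hy0, hyA, hAy⟩ := MSStep.exists_reflTransGen_lt hA1
    exact hAy.trans (ih y hyA hy0)
end

section
/- In the model MS, for every positive integer A with A ≡ 2 (mod 3) there exists a finite sequence of allowed MS-moves transforming A into a strictly smaller positive integer. (Concretely: if A is even one may apply x/2 then (x-1)/3; if A is odd one applies 3x+1 then x/2 repeatedly until reaching an even intermediate quotient, then divides down and strips trailing applications of (x-1)/3.) -/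
/-! Writing `A + 1 = 2 ^ k * q` with `q` odd, the pairs of moves `3x+1`, `x/2` climb from
`A = 2 ^ k * q - 1` to the even number `3 ^ k * q - 1`; one halving gives `(3 ^ k * q - 1) / 2`,
from which `k` moves `(x-1)/3` descend to `(q - 1) / 2`. Since `3 ∣ A + 1`, also `3 ∣ q`, so
`q ≥ 3` and `(q - 1) / 2` is a positive number below `A`. For even `A` this is `k = 0`, a single
halving. -/

namespace MSStep

theorem half {x : ℕ} (hx : 0 < x) (he : x % 2 = 0) : MSStep x (x / 2) :=
  ⟨hx, .inr (.inl ⟨he, rfl⟩)⟩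

theorem reflTransGen_two_mul_sub_one {n : ℕ} (hn : 0 < n) :
    Relation.ReflTransGen MSStep (2 * n - 1) (3 * n - 1) := by
  have hodd : MSStep (2 * n - 1) (3 * (2 * n - 1) + 1) := ⟨by omega, .inl ⟨by omega, rfl⟩⟩
  have hhalf : MSStep (3 * (2 * n - 1) + 1) (3 * n - 1) := by
    convert half (x := 3 * (2 * n - 1) + 1) (by omega) (by omega) using 1
    omega
  exact .tail (.single hodd) hhalf

theorem reflTransGen_two_pow_mul_sub_one_s12 (k : ℕ) {q : ℕ} (hq : 0 < q) :
    Relation.ReflTransGen MSStep (2 ^ k * q - 1) (3 ^ k * q - 1) := by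
  induction k generalizing q with
  | zero => simp only [pow_zero, one_mul]; exact .refl
  | succ k ih =>
    have hclimb := reflTransGen_two_mul_sub_one (n := 2 ^ k * q) (by positivity)
    rw [show 2 * (2 ^ k * q) = 2 ^ (k + 1) * q by ring,
      show 3 * (2 ^ k * q) = 2 ^ k * (3 * q) by ring] at hclimb
    rw [show 3 ^ (k + 1) * q = 3 ^ k * (3 * q) by ring]
    exact hclimb.trans (ih (by omega))

theorem three_mul_sub_one_div_two {s : ℕ} (hs : Odd s) (hs1 : 1 < s) :
    MSStep ((3 * s - 1) / 2) ((s - 1) / 2) := by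
  obtain ⟨r, rfl⟩ := hs
  exact ⟨by omega, .inr (.inr ⟨by omega, by omega, by omega⟩)⟩

theorem reflTransGen_three_pow_mul_sub_one_div_two_s12 (k : ℕ) {t : ℕ} (ht : Odd t) (ht1 : 1 < t) :
    Relation.ReflTransGen MSStep ((3 ^ k * t - 1) / 2) ((t - 1) / 2) := by
  induction k with
  | zero => simp only [pow_zero, one_mul]; exact .refl
  | succ k ih =>
    have hs1 : 1 < 3 ^ k * t := lt_of_lt_of_le ht1 (Nat.le_mul_of_pos_left t (by positivity))
    rw [pow_succ', mul_assoc]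
    exact .head (three_mul_sub_one_div_two ((Odd.pow (by decide)).mul ht) hs1) ih

end MSStep

theorem ms_descending_mod3_eq_2_general (A : ℕ) (h : A % 3 = 2) :
    ∃ C : ℕ, Relation.ReflTransGen MSStep A C ∧ 0 < C ∧ C < A := by
  obtain ⟨k, q, hq, hAq⟩ := Nat.exists_eq_two_pow_mul_odd (n := A + 1) (by omega)
  have hq3 : 3 ∣ q := by
    have h3 : 3 ∣ 2 ^ k * q := hAq ▸ Nat.dvd_of_mod_eq_zero (by omega)
    exact (Nat.Coprime.pow_right k (by decide : Nat.Coprime 3 2)).dvd_of_dvd_mul_left h3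
  have hq_ge : 3 ≤ q := Nat.le_of_dvd hq.pos hq3
  have hqA : q ≤ A + 1 := hAq ▸ Nat.le_mul_of_pos_left q (by positivity)
  have hclimb : Relation.ReflTransGen MSStep A (3 ^ k * q - 1) := by
    simpa [← hAq] using MSStep.reflTransGen_two_pow_mul_sub_one_s12 k hq.pos
  have hpeak : 3 ≤ 3 ^ k * q := hq_ge.trans (Nat.le_mul_of_pos_left q (by positivity))
  have hpeak_odd : (3 ^ k * q) % 2 = 1 := Nat.odd_iff.mp ((Odd.pow (by decide)).mul hq)
  refine ⟨(q - 1) / 2, ?_, by omega, by omega⟩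
  exact (hclimb.tail (MSStep.half (by omega) (by omega))).trans
    (MSStep.reflTransGen_three_pow_mul_sub_one_div_two_s12 k hq (by omega))

theorem ms_descending_mod3_eq_2 (A : ℕ) (hA : 0 < A) (h : A % 3 = 2) :
    ∃ C : ℕ, Relation.ReflTransGen MSStep A C ∧ 0 < C ∧ C < A :=
  ms_descending_mod3_eq_2_general A h
end

section
/- For every positive integer m with m ≡ 0 (mod 3) (i.e. m is represented by a base-3 string R ending in digit 0) and every positive integer n, the number 3·(3^n·m + (3^n - 1)) + 2 = 3^{n+1}·m + (3^{n+1} - 1), written in base 3 as R followed by n+1 copies of the digit 2, is reachable in model M1 from the number 3^n·m + (3^n - 1), written in base 3 as R followed by n copies of the digit 2. -/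
lemma chain_aux (k : ℕ) : Relation.ReflTransGen M1Step (3 * k + 2) (9 * k + 8) := by
  have h1 : M1Step (3*k+2) (9*k+7) := ⟨by omega, Or.inl (by ring)⟩
  have h2 : M1Step (9*k+7) (27*k+22) := ⟨by omega, Or.inl (by ring)⟩
  have h3 : M1Step (27*k+22) (54*k+44) := ⟨by omega, Or.inr (Or.inl (by ring))⟩
  have h4 : M1Step (54*k+44) (108*k+88) := ⟨by omega, Or.inr (Or.inl (by ring))⟩
  have h5 : M1Step (108*k+88) (36*k+29) :=
    ⟨by omega, Or.inr (Or.inr (Or.inr ⟨by omega, by omega, by omega⟩))⟩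
  have h6 : M1Step (36*k+29) (72*k+58) := ⟨by omega, Or.inr (Or.inl (by ring))⟩
  have h7 : M1Step (72*k+58) (24*k+19) :=
    ⟨by omega, Or.inr (Or.inr (Or.inr ⟨by omega, by omega, by omega⟩))⟩
  have h8 : M1Step (24*k+19) (8*k+6) :=
    ⟨by omega, Or.inr (Or.inr (Or.inr ⟨by omega, by omega, by omega⟩))⟩
  have h9 : M1Step (8*k+6) (4*k+3) :=
    ⟨by omega, Or.inr (Or.inr (Or.inl ⟨by omega, by omega⟩))⟩
  have h10 : M1Step (4*k+3) (12*k+10) := ⟨by omega, Or.inl (by ring)⟩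
  have h11 : M1Step (12*k+10) (6*k+5) :=
    ⟨by omega, Or.inr (Or.inr (Or.inl ⟨by omega, by omega⟩))⟩
  have h12 : M1Step (6*k+5) (18*k+16) := ⟨by omega, Or.inl (by ring)⟩
  have h13 : M1Step (18*k+16) (9*k+8) :=
    ⟨by omega, Or.inr (Or.inr (Or.inl ⟨by omega, by omega⟩))⟩
  exact .head h1 (.head h2 (.head h3 (.head h4 (.head h5 (.head h6 (.head h7
    (.head h8 (.head h9 (.head h10 (.head h11 (.head h12 (.single h13))))))))))))

theorem two_appending (m n : ℕ) (hm : 0 < m) (h3 : m % 3 = 0) (hn : 1 ≤ n) :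
    Relation.ReflTransGen M1Step (3 ^ n * m + (3 ^ n - 1))
      (3 ^ (n + 1) * m + (3 ^ (n + 1) - 1)) := by
  obtain ⟨s, rfl⟩ : ∃ s, n = s + 1 := ⟨n - 1, by omega⟩
  set a := 3 ^ s with ha
  have ha1 : 1 ≤ a := Nat.one_le_pow _ _ (by norm_num)
  have e1 : 3 ^ (s + 1) = 3 * a := by rw [ha, pow_succ]; ring
  have e2 : 3 ^ (s + 1 + 1) = 9 * a := by rw [ha, pow_succ, pow_succ]; ring
  rw [e1, e2]
  have hb : a * (m + 1) = a * m + a := by ring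
  have hx : 3 * a * m + (3 * a - 1) = 3 * (a * (m + 1) - 1) + 2 := by
    have : 3 * a * m = 3 * (a * m) := by ring
    rw [hb, this]; omega
  have hy : 9 * a * m + (9 * a - 1) = 9 * (a * (m + 1) - 1) + 8 := by
    have : 9 * a * m = 9 * (a * m) := by ring
    rw [hb, this]; omega
  rw [hx, hy]
  exact chain_aux _
end

section
/- In the model M1 (moves x ↦ 3x+1; x ↦ 2x; x ↦ x/2 if 2 ∣ x; x ↦ (x-1)/3 if x ≡ 1 mod 3 with positive result), every positive integer A is reachable from 4 and 4 is reachable from A; in particular the reachability relation of M1 restricted to positive integers has a single equivalence class under mutual reachability. -/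
open Relation

instance : Std.Symm M1Step where
  symm x y := by unfold M1Step; omega

namespace M1Step

theorem exists_lt_reflTransGen {A : ℕ} (hA : 1 < A) :
    ∃ B < A, 0 < B ∧ ReflTransGen M1Step A B := by
  rcases (by omega : A % 2 = 0 ∨ A % 4 = 1 ∨ A % 4 = 3) with hA2 | hA4 | hA4
  · exact ⟨A / 2, by omega, by omega, .single (by unfold M1Step; omega)⟩
  · obtain ⟨k, rfl⟩ : ∃ k, A = 4 * k + 1 := ⟨A / 4, by omega⟩
    refine ⟨3 * k + 1, by omega, by omega,
      List.relationReflTransGen_of_exists_isChain_cons [12 * k + 4, 6 * k + 2, 3 * k + 1] ?_ rfl⟩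
    simp only [List.isChain_cons_cons, List.isChain_singleton, and_true, M1Step]
    and_intros <;> omega
  · obtain ⟨k, rfl⟩ : ∃ k, A = 4 * k + 3 := ⟨A / 4, by omega⟩
    refine ⟨3 * k + 2, by omega, by omega,
      List.relationReflTransGen_of_exists_isChain_cons
        [8 * k + 6, 16 * k + 12, 48 * k + 37, 144 * k + 112, 72 * k + 56, 36 * k + 28,
          18 * k + 14, 9 * k + 7, 3 * k + 2] ?_ rfl⟩
    simp only [List.isChain_cons_cons, List.isChain_singleton, and_true, M1Step]
    and_intros <;> omega

theorem reflTransGen_one {A : ℕ} (hA : 0 < A) : ReflTransGen M1Step A 1 := by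
  induction A using Nat.strong_induction_on with
  | _ A ih =>
    rcases (by omega : A = 1 ∨ 1 < A) with rfl | hA1
    · exact .refl
    obtain ⟨B, hBA, hB, hAB⟩ := exists_lt_reflTransGen hA1
    exact hAB.trans (ih B hBA hB)

end M1Step

theorem m1_single_class (A : ℕ) (hA : 0 < A) :
    Relation.ReflTransGen M1Step 4 A ∧ Relation.ReflTransGen M1Step A 4 := by
  have hA4 : ReflTransGen M1Step A 4 :=
    (M1Step.reflTransGen_one hA).tail (by unfold M1Step; omega)
  exact ⟨Std.Symm.symm _ _ hA4, hA4⟩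
end
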